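/- arXiv:2303.02569 — 8 statements merged into one kernel-verified Lean document; each statement's English description precedes it below -/
import Mathlib

section
/- Let β > 1 be a real number and let f : ℝ → ℝ be differentiable and convex on (0, ∞). Then the relaxed function f̃_β is continuous on (0, ∞), convex on (0, ∞), and satisfies f̃_β(1) = 0. -/
/-- The asymmetrically-relaxed function `f̃_β`: equals `f(u) + C_{f,β}` for `u ≥ β`
and the linearization `f'(β)·u − f'(β)` for `u < β`, where
`C_{f,β} = −f(β) + f'(β)·(β − 1)`. -/
noncomputable def relaxed (f : ℝ → ℝ) (β : ℝ) (u : ℝ) : ℝ :=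
  if β ≤ u then f u + (-(f β) + deriv f β * (β - 1))
  else deriv f β * u - deriv f β

/-!
Both pieces of `f̃_β` have slope `f'(β)` at `β` and agree there, so `f̃_β` is differentiable on
`(0, ∞)` with derivative `u ↦ f'(max u β)`. This is monotone because `f'` is (convexity of `f`),
hence `f̃_β` is convex.
-/

open Set

theorem HasDerivAt.ite_le {g h : ℝ → ℝ} {a d : ℝ} (hg : HasDerivAt g d a)
    (hh : HasDerivAt h d a) (hgh : g a = h a) :
    HasDerivAt (fun u => if a ≤ u then g u else h u) d a := by
  have hright : HasDerivWithinAt (fun u => if a ≤ u then g u else h u) d (Ici a) a :=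
    hg.hasDerivWithinAt.congr (fun v hv => if_pos hv) (if_pos le_rfl)
  have hleft : HasDerivWithinAt (fun u => if a ≤ u then g u else h u) d (Iic a) a := by
    refine hh.hasDerivWithinAt.congr (fun v hv => ?_) (by simp [hgh])
    rcases (mem_Iic.mp hv).eq_or_lt with rfl | hva
    · simp [hgh]
    · exact if_neg hva.not_ge
  simpa [Iic_union_Ici] using hleft.union hright

section Relaxed

variable {f : ℝ → ℝ} {β : ℝ}

theorem hasDerivAt_relaxed (hβ : 0 < β) (hdiff : DifferentiableOn ℝ f (Ioi 0)) {u : ℝ}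
    (hu : 0 < u) : HasDerivAt (relaxed f β) (deriv f (max u β)) u := by
  have hf : ∀ {x : ℝ}, 0 < x → HasDerivAt f (deriv f x) x := fun hx =>
    (hdiff.differentiableAt (isOpen_Ioi.mem_nhds hx)).hasDerivAt
  set C := -(f β) + deriv f β * (β - 1)
  have hline (x : ℝ) : HasDerivAt (fun v => deriv f β * v - deriv f β) (deriv f β) x := by
    simpa using ((hasDerivAt_id x).const_mul (deriv f β)).sub_const (deriv f β)
  rcases lt_trichotomy u β with hlt | rfl | hgt
  · have hev : relaxed f β =ᶠ[nhds u] fun v => deriv f β * v - deriv f β := by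
      filter_upwards [Iio_mem_nhds hlt] with v hv
      exact if_neg (not_le.mpr hv)
    rw [max_eq_right hlt.le]
    exact (hline u).congr_of_eventuallyEq hev
  · rw [max_self]
    exact ((hf hu).add_const C).ite_le (hline u) (by ring)
  · have hev : relaxed f β =ᶠ[nhds u] fun v => f v + C := by
      filter_upwards [Ioi_mem_nhds hgt] with v hv
      exact if_pos (le_of_lt hv)
    rw [max_eq_left hgt.le]
    exact ((hf hu).add_const C).congr_of_eventuallyEq hev

theorem continuousOn_relaxed (hβ : 0 < β) (hdiff : DifferentiableOn ℝ f (Ioi 0)) :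
    ContinuousOn (relaxed f β) (Ioi 0) := fun _ hu =>
  (hasDerivAt_relaxed hβ hdiff hu).continuousAt.continuousWithinAt

theorem convexOn_relaxed (hβ : 0 < β) (hdiff : DifferentiableOn ℝ f (Ioi 0))
    (hconv : ConvexOn ℝ (Ioi 0) f) : ConvexOn ℝ (Ioi 0) (relaxed f β) := by
  have hmono : MonotoneOn (deriv f) (Ioi 0) :=
    hconv.monotoneOn_deriv fun _ hx => hdiff.differentiableAt (isOpen_Ioi.mem_nhds hx)
  have hderiv : EqOn (fun u => deriv f (max u β)) (deriv (relaxed f β)) (Ioi 0) :=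
    fun _ hu => (hasDerivAt_relaxed hβ hdiff hu).deriv.symm
  refine MonotoneOn.convexOn_of_deriv (convex_Ioi 0) (continuousOn_relaxed hβ hdiff)
    ?_ ?_ <;> rw [interior_Ioi]
  · exact fun _ hu => (hasDerivAt_relaxed hβ hdiff hu).differentiableAt.differentiableWithinAt
  · refine MonotoneOn.congr (fun x _ y _ hxy => ?_) hderiv
    exact hmono (hβ.trans_le (le_max_right x β)) (hβ.trans_le (le_max_right y β))
      (max_le_max_right β hxy)

theorem relaxed_one (hβ : 1 < β) : relaxed f β 1 = 0 := by
  rw [relaxed, if_neg hβ.not_ge, mul_one, sub_self]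

end Relaxed

theorem stmt0 (β : ℝ) (hβ : 1 < β) (f : ℝ → ℝ)
    (hdiff : DifferentiableOn ℝ f (Set.Ioi 0))
    (hconv : ConvexOn ℝ (Set.Ioi 0) f) :
    ContinuousOn (relaxed f β) (Set.Ioi 0) ∧
    ConvexOn ℝ (Set.Ioi 0) (relaxed f β) ∧
    relaxed f β 1 = 0 :=
  have hβ0 : 0 < β := one_pos.trans hβ
  ⟨continuousOn_relaxed hβ0 hdiff, convexOn_relaxed hβ0 hdiff hconv, relaxed_one hβ⟩
end

section
/- Let β > 1, let f : ℝ → ℝ be differentiable and convex on (0, ∞), let μ be a measure on a measurable space X, and let p, q : X → ℝ be measurable with p ≥ 0, q > 0 pointwise, p and q integrable with ∫ p dμ = ∫ q dμ = 1. If the function x ↦ q(x)·f̃_β(p(x)/q(x)) is μ-integrable, then D_{f̃_β}(p‖q) ≥ 0. -/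
/-!
`f̃_β` dominates the affine function `u ↦ f'(β) (u - 1)`: they agree for `u < β`, and for `u ≥ β`
this is the tangent-line inequality of the convex function `f` at `β`. Passing to perspectives,
`q f̃_β (p / q) ≥ f'(β) (p - q)` pointwise, and the right-hand side integrates to
`f'(β) (∫ p - ∫ q) = 0`.
-/

open MeasureTheory

open Set

theorem ConvexOn.add_deriv_mul_sub_le {S : Set ℝ} {f : ℝ → ℝ} {x y : ℝ} (hfc : ConvexOn ℝ S f)
    (hx : x ∈ S) (hy : y ∈ S) (hfd : DifferentiableAt ℝ f x) :
    f x + deriv f x * (y - x) ≤ f y := by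
  rcases lt_trichotomy x y with hxy | rfl | hyx
  · have h := hfc.deriv_le_slope hx hy hxy hfd
    rw [slope_def_field, le_div_iff₀ (sub_pos.mpr hxy)] at h
    linarith
  · simp
  · have h := hfc.slope_le_deriv hy hx hyx hfd
    rw [slope_def_field, div_le_iff₀ (sub_pos.mpr hyx)] at h
    linarith

theorem deriv_mul_sub_one_le_relaxed {f : ℝ → ℝ} {β : ℝ} (hβ : 0 < β)
    (hfd : DifferentiableAt ℝ f β) (hconv : ConvexOn ℝ (Ioi 0) f) (u : ℝ) :
    deriv f β * (u - 1) ≤ relaxed f β u := by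
  unfold relaxed
  split_ifs with hβu
  · have := hconv.add_deriv_mul_sub_le hβ (hβ.trans_le hβu) hfd
    linarith
  · linarith

theorem mul_sub_le_mul_comp_div {g : ℝ → ℝ} {c : ℝ} (hg : ∀ u, c * (u - 1) ≤ g u)
    (a : ℝ) {b : ℝ} (hb : 0 < b) : c * (a - b) ≤ b * g (a / b) :=
  calc c * (a - b) = b * (c * (a / b - 1)) := by field_simp
    _ ≤ b * g (a / b) := mul_le_mul_of_nonneg_left (hg _) hb.le

theorem integral_mul_comp_div_nonneg {X : Type*} [MeasurableSpace X] {μ : Measure X}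
    {g : ℝ → ℝ} {c : ℝ} (hg : ∀ u, c * (u - 1) ≤ g u) {p q : X → ℝ} (hq0 : ∀ x, 0 < q x)
    (hpint : Integrable p μ) (hqint : Integrable q μ) (hsum : ∫ x, p x ∂μ = ∫ x, q x ∂μ)
    (hint : Integrable (fun x => q x * g (p x / q x)) μ) :
    0 ≤ ∫ x, q x * g (p x / q x) ∂μ :=
  calc 0 = ∫ x, c * (p x - q x) ∂μ := by
        rw [integral_const_mul, integral_sub hpint hqint, hsum, sub_self, mul_zero]
    _ ≤ ∫ x, q x * g (p x / q x) ∂μ :=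
        integral_mono ((hpint.sub hqint).const_mul c) hint
          fun x => mul_sub_le_mul_comp_div hg (p x) (hq0 x)

theorem stmt2_general {X : Type*} [MeasurableSpace X] (μ : Measure X)
    (β : ℝ) (hβ : 1 < β) (f : ℝ → ℝ)
    (hdiff : DifferentiableOn ℝ f (Set.Ioi 0))
    (hconv : ConvexOn ℝ (Set.Ioi 0) f)
    (p q : X → ℝ)
    (hq0 : ∀ x, 0 < q x)
    (hpint : Integrable p μ) (hqint : Integrable q μ)
    (hpsum : ∫ x, p x ∂μ = 1) (hqsum : ∫ x, q x ∂μ = 1)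
    (hint : Integrable (fun x => q x * relaxed f β (p x / q x)) μ) :
    0 ≤ ∫ x, q x * relaxed f β (p x / q x) ∂μ := by
  have hβ0 : 0 < β := zero_lt_one.trans hβ
  have hfd : DifferentiableAt ℝ f β := hdiff.differentiableAt (Ioi_mem_nhds hβ0)
  exact integral_mul_comp_div_nonneg (deriv_mul_sub_one_le_relaxed hβ0 hfd hconv) hq0
    hpint hqint (hpsum.trans hqsum.symm) hint

theorem stmt2 {X : Type*} [MeasurableSpace X] (μ : Measure X)
    (β : ℝ) (hβ : 1 < β) (f : ℝ → ℝ)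
    (hdiff : DifferentiableOn ℝ f (Set.Ioi 0))
    (hconv : ConvexOn ℝ (Set.Ioi 0) f)
    (p q : X → ℝ) (hpm : Measurable p) (hqm : Measurable q)
    (hp0 : ∀ x, 0 ≤ p x) (hq0 : ∀ x, 0 < q x)
    (hpint : Integrable p μ) (hqint : Integrable q μ)
    (hpsum : ∫ x, p x ∂μ = 1) (hqsum : ∫ x, q x ∂μ = 1)
    (hint : Integrable (fun x => q x * relaxed f β (p x / q x)) μ) :
    0 ≤ ∫ x, q x * relaxed f β (p x / q x) ∂μ :=
  stmt2_general μ β hβ f hdiff hconv p q hq0 hpint hqint hpsum hqsum hint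
end

section
/- Let β > 1, let f : ℝ → ℝ be differentiable and strictly convex on (0, ∞), let μ be a measure on a measurable space X, and let p, q : X → ℝ be measurable with p ≥ 0, q > 0 pointwise, p and q integrable with ∫ p dμ = ∫ q dμ = 1, and suppose x ↦ q(x)·f̃_β(p(x)/q(x)) is μ-integrable. If D_{f̃_β}(p‖q) = 0, then p(x) ≤ β·q(x) for μ-almost every x ∈ X. -/
open MeasureTheory

/-!
Subtracting the tangent line `f'(β)(u - 1)` from `f̃_β` leaves a function that vanishes on
`u < β` and equals `f u - f β - f'(β)(u - β)` on `u ≥ β`; by strict convexity it is nonnegative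
and strictly positive for `u > β`. Since `∫ q (p/q - 1) dμ = ∫ p - ∫ q = 0`, subtracting the tangent
line does not change the divergence, so `∫ q · (f̃_β - tangent)(p/q) dμ = 0` with a nonnegative
integrand. Hence the integrand vanishes almost everywhere, which forces `p/q ≤ β` a.e.
-/

lemma StrictConvexOn.deriv_mul_sub_lt_sub {S : Set ℝ} {f : ℝ → ℝ} {x y : ℝ}
    (hfc : StrictConvexOn ℝ S f) (hx : x ∈ S) (hy : y ∈ S) (hxy : x < y)
    (hfd : DifferentiableAt ℝ f x) :
    deriv f x * (y - x) < f y - f x := by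
  have h := hfc.deriv_lt_slope hx hy hxy hfd
  rwa [slope_def_field, lt_div_iff₀ (sub_pos.2 hxy)] at h

section RelaxedGap

variable {f : ℝ → ℝ} {β : ℝ}

lemma relaxed_sub_deriv_mul_eq (f : ℝ → ℝ) (β u : ℝ) :
    relaxed f β u - deriv f β * (u - 1) =
      if β ≤ u then f u - f β - deriv f β * (u - β) else 0 := by
  unfold relaxed
  split_ifs <;> ring

lemma relaxed_sub_deriv_mul_pos (hβ : 0 < β) (hconv : StrictConvexOn ℝ (Set.Ioi 0) f)
    (hfd : DifferentiableAt ℝ f β) {u : ℝ} (hu : β < u) :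
    0 < relaxed f β u - deriv f β * (u - 1) := by
  rw [relaxed_sub_deriv_mul_eq, if_pos hu.le, sub_pos]
  exact hconv.deriv_mul_sub_lt_sub hβ (hβ.trans hu) hu hfd

lemma relaxed_sub_deriv_mul_nonneg (hβ : 0 < β) (hconv : StrictConvexOn ℝ (Set.Ioi 0) f)
    (hfd : DifferentiableAt ℝ f β) (u : ℝ) :
    0 ≤ relaxed f β u - deriv f β * (u - 1) := by
  rcases lt_or_ge β u with hu | hu
  · exact (relaxed_sub_deriv_mul_pos hβ hconv hfd hu).le
  · rw [relaxed_sub_deriv_mul_eq]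
    split_ifs with h
    · simp [le_antisymm hu h]
    · exact le_rfl

end RelaxedGap

lemma mul_comp_div_sub_affine_eq {X : Type*} {p q : X → ℝ} (φ : ℝ → ℝ) (a : ℝ)
    (hq : ∀ x, q x ≠ 0) :
    (fun x => q x * (φ (p x / q x) - a * (p x / q x - 1))) =
      fun x => q x * φ (p x / q x) - a * (p x - q x) := by
  ext x
  field_simp [hq x]

section AffineShift

variable {X : Type*} [MeasurableSpace X] {μ : Measure X} {p q : X → ℝ}

lemma integrable_mul_comp_div_sub_affine (φ : ℝ → ℝ) (a : ℝ) (hq : ∀ x, q x ≠ 0)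
    (hpint : Integrable p μ) (hqint : Integrable q μ)
    (hint : Integrable (fun x => q x * φ (p x / q x)) μ) :
    Integrable (fun x => q x * (φ (p x / q x) - a * (p x / q x - 1))) μ := by
  rw [mul_comp_div_sub_affine_eq φ a hq]
  exact hint.sub ((hpint.sub hqint).const_mul a)

lemma integral_mul_comp_div_sub_affine (φ : ℝ → ℝ) (a : ℝ) (hq : ∀ x, q x ≠ 0)
    (hpint : Integrable p μ) (hqint : Integrable q μ)
    (hint : Integrable (fun x => q x * φ (p x / q x)) μ)
    (hsum : ∫ x, p x ∂μ = ∫ x, q x ∂μ) :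
    ∫ x, q x * (φ (p x / q x) - a * (p x / q x - 1)) ∂μ = ∫ x, q x * φ (p x / q x) ∂μ := by
  have hlin : Integrable (fun x => a * (p x - q x)) μ := (hpint.sub hqint).const_mul a
  rw [mul_comp_div_sub_affine_eq φ a hq, integral_sub hint hlin, integral_const_mul, integral_sub hpint hqint, hsum, sub_self, mul_zero, sub_zero]

end AffineShift

theorem stmt3_general {X : Type*} [MeasurableSpace X] (μ : Measure X)
    (β : ℝ) (hβ : 1 < β) (f : ℝ → ℝ)
    (hdiff : DifferentiableOn ℝ f (Set.Ioi 0))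
    (hconv : StrictConvexOn ℝ (Set.Ioi 0) f)
    (p q : X → ℝ)
    (hq0 : ∀ x, 0 < q x)
    (hpint : Integrable p μ) (hqint : Integrable q μ)
    (hpsum : ∫ x, p x ∂μ = 1) (hqsum : ∫ x, q x ∂μ = 1)
    (hint : Integrable (fun x => q x * relaxed f β (p x / q x)) μ)
    (hzero : ∫ x, q x * relaxed f β (p x / q x) ∂μ = 0) :
    ∀ᵐ x ∂μ, p x ≤ β * q x := by
  have hβ0 : 0 < β := one_pos.trans hβ
  have hfd : DifferentiableAt ℝ f β := hdiff.differentiableAt (Ioi_mem_nhds hβ0)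
  have hq : ∀ x, q x ≠ 0 := fun x => (hq0 x).ne'
  have hgap_zero : ∀ᵐ x ∂μ,
      q x * (relaxed f β (p x / q x) - deriv f β * (p x / q x - 1)) = 0 := by
    refine (integral_eq_zero_iff_of_nonneg
      (fun x => mul_nonneg (hq0 x).le (relaxed_sub_deriv_mul_nonneg hβ0 hconv hfd _))
      (integrable_mul_comp_div_sub_affine _ _ hq hpint hqint hint)).1 ?_
    rw [integral_mul_comp_div_sub_affine _ _ hq hpint hqint hint (hpsum.trans hqsum.symm), hzero]
  filter_upwards [hgap_zero] with x hx
  by_contra! hlt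
  have hu : β < p x / q x := (lt_div_iff₀ (hq0 x)).2 hlt
  exact (mul_pos (hq0 x) (relaxed_sub_deriv_mul_pos hβ0 hconv hfd hu)).ne' hx

theorem stmt3 {X : Type*} [MeasurableSpace X] (μ : Measure X)
    (β : ℝ) (hβ : 1 < β) (f : ℝ → ℝ)
    (hdiff : DifferentiableOn ℝ f (Set.Ioi 0))
    (hconv : StrictConvexOn ℝ (Set.Ioi 0) f)
    (p q : X → ℝ) (hpm : Measurable p) (hqm : Measurable q)
    (hp0 : ∀ x, 0 ≤ p x) (hq0 : ∀ x, 0 < q x)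
    (hpint : Integrable p μ) (hqint : Integrable q μ)
    (hpsum : ∫ x, p x ∂μ = 1) (hqsum : ∫ x, q x ∂μ = 1)
    (hint : Integrable (fun x => q x * relaxed f β (p x / q x)) μ)
    (hzero : ∫ x, q x * relaxed f β (p x / q x) ∂μ = 0) :
    ∀ᵐ x ∂μ, p x ≤ β * q x :=
  stmt3_general μ β hβ f hdiff hconv p q hq0 hpint hqint hpsum hqsum hint hzero
end

section
/- Let e ∈ ℝ, α > 0, β > 1 with e > (α + 1)·(log β + 1). Then ω* = exp(e/(1 + α) − 1) satisfies ω* > β, ω* is the unique maximizer of h over [0, ∞), and h(ω*) = (1 + α)·exp(e/(1 + α) − 1) − α·C_{f,β}, where C_{f,β} = −β·log β + (log β + 1)·(β − 1). -/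
/-!
On `[β, ∞)` the relaxation is exact, so there `h(ω) = (1 + α)·(ω·s − ω·log ω) − α·C_{f,β}` with
`s = e/(1 + α)`, and `ω·s − ω·log ω` is uniquely maximised at `ω = exp(s − 1)` with value
`exp(s − 1)` (the Legendre transform of `u·log u`). The hypothesis on `e` says `β < exp(s − 1)`.
On `[0, β)` the relaxation is the tangent line of `u·log u` at `β` shifted by `C_{f,β}`; bounding
`ω·log ω` below by the same tangent line makes `h` at most an affine function of slope
`e − (1 + α)(log β + 1) > 0` that agrees with `h` at `β`, so `h(ω) < h(β)` there.
-/

/-- `C_{f,β} = −f(β) + f'(β)·(β − 1)` for `f(u) = u·log u`. -/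
noncomputable def Cfb (β : ℝ) : ℝ := -β * Real.log β + (Real.log β + 1) * (β - 1)

/-- The relaxed function `f̃_β` for `f(u) = u·log u`. -/
noncomputable def ftilde (β ω : ℝ) : ℝ :=
  if β ≤ ω then ω * Real.log ω + Cfb β
  else (Real.log β + 1) * (ω - 1)

/-- `h(ω) = ω·e − ω·log ω − α·f̃_β(ω)` (note `Real.log 0 = 0`, matching `0·log 0 = 0`). -/
noncomputable def h (e α β ω : ℝ) : ℝ := ω * e - ω * Real.log ω - α * ftilde β ω

open Real

namespace Real

-- The strict tangent-line inequality of `u·log u` at `y`.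
lemma sub_lt_mul_sub_log {x y : ℝ} (hx : 0 ≤ x) (hy : 0 < y) (hxy : x ≠ y) :
    x - y < x * (log x - log y) := by
  rcases hx.eq_or_lt with rfl | hx
  · simpa using hy
  have hlog : log (y / x) < y / x - 1 :=
    log_lt_sub_one_of_pos (div_pos hy hx) (by rwa [ne_eq, div_eq_one_iff_eq hx.ne', eq_comm])
  rw [log_div hy.ne' hx.ne'] at hlog
  have hscaled := mul_lt_mul_of_pos_left hlog hx
  rw [mul_sub x (y / x), mul_div_cancel₀ y hx.ne', mul_one] at hscaled
  linarith

lemma sub_le_mul_sub_log {x y : ℝ} (hx : 0 ≤ x) (hy : 0 < y) :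
    x - y ≤ x * (log x - log y) := by
  rcases eq_or_ne x y with rfl | hxy
  · simp
  · exact (sub_lt_mul_sub_log hx hy hxy).le

lemma mul_sub_mul_log_lt_exp {s ω : ℝ} (hω : 0 ≤ ω) (hne : ω ≠ exp (s - 1)) :
    ω * s - ω * log ω < exp (s - 1) := by
  have := sub_lt_mul_sub_log hω (exp_pos (s - 1)) hne
  rw [log_exp] at this
  linarith

end Real

section

variable {e α β ω : ℝ}

lemma h_of_le (hω : β ≤ ω) : h e α β ω = ω * e - (1 + α) * (ω * log ω) - α * Cfb β := by
  simp only [h, ftilde, if_pos hω]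
  ring

lemma h_of_lt (hω : ω < β) :
    h e α β ω = ω * e - ω * log ω - α * ((log β + 1) * (ω - 1)) := by
  simp only [h, ftilde, if_neg hω.not_ge]

lemma h_exp_eq (hα : 0 < 1 + α) (hβ : β ≤ exp (e / (1 + α) - 1)) :
    h e α β (exp (e / (1 + α) - 1)) = (1 + α) * exp (e / (1 + α) - 1) - α * Cfb β := by
  rw [h_of_le hβ, log_exp]
  field_simp
  ring

lemma h_lt_of_le (hα : 0 < 1 + α) (hβω : β ≤ ω) (hω : 0 ≤ ω) (hne : ω ≠ exp (e / (1 + α) - 1)) :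
    h e α β ω < (1 + α) * exp (e / (1 + α) - 1) - α * Cfb β := by
  have hmax := mul_sub_mul_log_lt_exp (s := e / (1 + α)) hω hne
  rw [h_of_le hβω]
  have he : ω * e = (1 + α) * (ω * (e / (1 + α))) := by field_simp
  nlinarith [mul_lt_mul_of_pos_left hmax hα]

lemma h_lt_h_of_lt (hβ : 0 < β) (he : (1 + α) * (log β + 1) < e) (hω : 0 ≤ ω) (hωβ : ω < β) :
    h e α β ω < h e α β β := by
  have htangent := sub_le_mul_sub_log hω hβ
  have hslope : 0 < (β - ω) * (e - (1 + α) * (log β + 1)) := mul_pos (by linarith) (by linarith)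
  rw [h_of_lt hωβ, h_of_le le_rfl, Cfb]
  nlinarith

end

theorem stmt6 (e α β : ℝ) (hα : 0 < α) (hβ : 1 < β)
    (he : (α + 1) * (Real.log β + 1) < e) :
    β < Real.exp (e / (1 + α) - 1) ∧
    (∀ ω : ℝ, 0 ≤ ω → ω ≠ Real.exp (e / (1 + α) - 1) →
      h e α β ω < h e α β (Real.exp (e / (1 + α) - 1))) ∧
    h e α β (Real.exp (e / (1 + α) - 1)) =
      (1 + α) * Real.exp (e / (1 + α) - 1) - α * Cfb β := by
  have hα1 : 0 < 1 + α := by linarith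
  have hβ0 : 0 < β := by linarith
  have he' : (1 + α) * (log β + 1) < e := by linarith
  have hβW : β < exp (e / (1 + α) - 1) := by
    rw [← exp_log hβ0, exp_lt_exp, lt_sub_iff_add_lt, lt_div_iff₀' hα1]
    exact he'
  refine ⟨hβW, fun ω hω hne => ?_, h_exp_eq hα1 hβW.le⟩
  rw [h_exp_eq hα1 hβW.le]
  rcases le_or_gt β ω with hβω | hωβ
  · exact h_lt_of_le hα1 hβω hω hne
  · exact (h_lt_h_of_lt hβ0 he' hω hωβ).trans (h_lt_of_le hα1 le_rfl hβ0.le hβW.ne)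
end

section
/- Let e ∈ ℝ, α > 0, β > 1, r > 0 with e > (α + 1)·(log β + 1) + log r. Then ω* = exp((e + α·log r)/(1 + α) − 1) satisfies ω* > β·r, ω* is the unique maximizer of h† over [0, ∞), and h†(ω*) = (1 + α)·exp((e + α·log r)/(1 + α) − 1) − α·C_{f,β}·r, where C_{f,β} = −β·log β + (log β + 1)·(β − 1). -/
/-- `h†(ω) = ω·e − ω·log ω − α·r·f̃_β(ω/r)`. -/
noncomputable def hdag (e α β r ω : ℝ) : ℝ :=
  ω * e - ω * Real.log ω - α * r * ftilde β (ω / r)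

/-!
Above the threshold `β r` the relaxation is `f` itself shifted by `C_{f,β}`, so there
`h†(ω) = ω (e + α log r) - (1 + α) ω log ω - α r C_{f,β}`, a strictly concave function whose
critical point is `ω*`. Below `β r` the relaxation is affine, `h†` is `ω ↦ ω b - ω log ω` plus a
constant, and the hypothesis on `e` puts its critical point `exp (b - 1)` beyond `β r`, so `h†`
increases up to `β r`. Both facts come from the tangent-line inequality for `u ↦ u log u`.
-/

open Real

lemma mul_log_add_sub_lt_mul_log {c ω : ℝ} (hc : 0 < c) (hω : 0 ≤ ω) (hne : ω ≠ c) :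
    ω * log c + ω - c < ω * log ω := by
  rcases hω.eq_or_lt with rfl | hω
  · simpa using hc
  have h := log_lt_sub_one_of_pos (div_pos hc hω)
    (by rwa [ne_eq, div_eq_one_iff_eq hω.ne', eq_comm])
  rw [log_div hc.ne' hω.ne', lt_sub_iff_add_lt, lt_div_iff₀ hω] at h
  linarith

lemma mul_sub_mul_mul_log_lt {a c ω : ℝ} (hc : 0 < c) (hω : 0 ≤ ω)
    (hne : ω ≠ exp (a / c - 1)) :
    ω * a - c * (ω * log ω) < c * exp (a / c - 1) := by
  have h := mul_log_add_sub_lt_mul_log (exp_pos (a / c - 1)) hω hne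
  rw [log_exp] at h
  have hlin : c * (ω * (a / c - 1) + ω - exp (a / c - 1)) = ω * a - c * exp (a / c - 1) := by
    field_simp
    ring
  linarith [mul_lt_mul_of_pos_left h hc]

lemma mul_sub_mul_mul_log_exp (a c : ℝ) (hc : 0 < c) :
    exp (a / c - 1) * a - c * (exp (a / c - 1) * log (exp (a / c - 1))) =
      c * exp (a / c - 1) := by
  rw [log_exp]
  field_simp
  ring

lemma mul_sub_mul_log_lt_of_lt {b c ω : ℝ} (hω : 0 ≤ ω) (hωc : ω < c) (hb : log c + 1 < b) :
    ω * b - ω * log ω < c * b - c * log c := by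
  have h := mul_log_add_sub_lt_mul_log (hω.trans_lt hωc) hω hωc.ne
  linarith [mul_pos (sub_pos.mpr hb) (sub_pos.mpr hωc)]

section hdag

variable {e α β r ω : ℝ}

lemma hdag_eq_of_mul_le (hβ : 0 < β) (hr : 0 < r) (hω : β * r ≤ ω) :
    hdag e α β r ω = ω * (e + α * log r) - (1 + α) * (ω * log ω) - α * r * Cfb β := by
  have hω₀ : 0 < ω := (mul_pos hβ hr).trans_le hω
  rw [hdag, ftilde, if_pos ((le_div_iff₀ hr).mpr hω), log_div hω₀.ne' hr.ne']
  field_simp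
  ring

lemma hdag_eq_of_le_mul (hβ : 0 < β) (hr : 0 < r) (hω : ω ≤ β * r) :
    hdag e α β r ω = ω * (e - α * (log β + 1)) - ω * log ω + α * r * (log β + 1) := by
  rcases hω.lt_or_eq with hω | rfl
  · rw [hdag, ftilde, if_neg (by rwa [not_le, div_lt_iff₀ hr])]
    field_simp
    ring
  · rw [hdag_eq_of_mul_le hβ hr le_rfl, Cfb, log_mul hβ.ne' hr.ne']
    ring

end hdag

theorem stmt8 (e α β r : ℝ) (hα : 0 < α) (hβ : 1 < β) (hr : 0 < r)
    (he : (α + 1) * (Real.log β + 1) + Real.log r < e) :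
    β * r < Real.exp ((e + α * Real.log r) / (1 + α) - 1) ∧
    (∀ ω : ℝ, 0 ≤ ω → ω ≠ Real.exp ((e + α * Real.log r) / (1 + α) - 1) →
      hdag e α β r ω < hdag e α β r (Real.exp ((e + α * Real.log r) / (1 + α) - 1))) ∧
    hdag e α β r (Real.exp ((e + α * Real.log r) / (1 + α) - 1)) =
      (1 + α) * Real.exp ((e + α * Real.log r) / (1 + α) - 1) - α * Cfb β * r := by
  set W := exp ((e + α * log r) / (1 + α) - 1)
  have hα₁ : 0 < 1 + α := by linarith
  have hβ₀ : 0 < β := by linarith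
  have hβr : 0 < β * r := mul_pos hβ₀ hr
  have hlogβr : log (β * r) = log β + log r := log_mul hβ₀.ne' hr.ne'
  have hβrW : β * r < W := by
    rw [← log_lt_iff_lt_exp hβr, hlogβr, lt_sub_iff_add_lt, lt_div_iff₀ hα₁]
    linarith
  have hW : hdag e α β r W = (1 + α) * W - α * Cfb β * r := by
    rw [hdag_eq_of_mul_le hβ₀ hr hβrW.le, mul_sub_mul_mul_log_exp _ _ hα₁]
    ring
  refine ⟨hβrW, fun ω hω hne => ?_, hW⟩
  rcases le_or_gt (β * r) ω with hβrω | hωβr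
  · rw [hdag_eq_of_mul_le hβ₀ hr hβrω, hW]
    linarith [mul_sub_mul_mul_log_lt hα₁ hω hne]
  · calc hdag e α β r ω < hdag e α β r (β * r) := by
          rw [hdag_eq_of_le_mul hβ₀ hr hωβr.le, hdag_eq_of_le_mul hβ₀ hr le_rfl]
          have := mul_sub_mul_log_lt_of_lt (b := e - α * (log β + 1)) hω hωβr
            (by rw [hlogβr]; linarith)
          linarith
      _ < hdag e α β r W := by
          rw [hdag_eq_of_mul_le hβ₀ hr le_rfl, hW]
          linarith [mul_sub_mul_mul_log_lt hα₁ hβr.le hβrW.ne]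
end

section
/- Let e ∈ ℝ, α > 0, β > 1, r > 0 with e ≤ (α + 1)·(log β + 1) + log r. Then ω* = exp(e − 1 − α·(log β + 1)) satisfies ω* ≤ β·r, ω* is the unique maximizer of h† over [0, ∞), and h†(ω*) = exp(e − 1 − α·(log β + 1)) + α·(log β + 1)·r. -/
open Real

lemma mul_sub_mul_log_exp_sub_one (a : ℝ) :
    exp (a - 1) * a - exp (a - 1) * log (exp (a - 1)) = exp (a - 1) := by
  rw [log_exp]; ring

lemma mul_sub_mul_log_lt_exp_sub_one {a ω : ℝ} (hω : 0 ≤ ω) (hne : ω ≠ exp (a - 1)) :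
    ω * a - ω * log ω < exp (a - 1) := by
  rcases hω.eq_or_lt with rfl | hω
  · simpa using exp_pos (a - 1)
  -- `log t < t - 1` at `t = exp (a - 1) / ω ≠ 1`, multiplied by `ω`
  have hlog : log (exp (a - 1) / ω) < exp (a - 1) / ω - 1 :=
    log_lt_sub_one_of_pos (by positivity) fun h ↦ hne ((div_eq_one_iff_eq hω.ne').mp h).symm
  rw [log_div (exp_ne_zero _) hω.ne', log_exp, lt_sub_iff_add_lt,
    lt_div_iff₀ hω] at hlog
  nlinarith

lemma ftilde_of_le {β x : ℝ} (hx : x ≤ β) : ftilde β x = (log β + 1) * (x - 1) := by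
  unfold ftilde Cfb
  split_ifs with h
  · obtain rfl := le_antisymm hx h
    ring
  · rfl

lemma tangent_le_ftilde {β : ℝ} (hβ : 0 < β) (x : ℝ) : (log β + 1) * (x - 1) ≤ ftilde β x := by
  unfold ftilde Cfb
  split_ifs with h
  · have hx : 0 < x := hβ.trans_le h
    have hlog : log (β / x) ≤ β / x - 1 := log_le_sub_one_of_pos (by positivity)
    rw [log_div hβ.ne' hx.ne', le_sub_iff_add_le, le_div_iff₀ hx] at hlog
    nlinarith
  · exact le_rfl

section hdag

variable {e α β r : ℝ}

lemma hdag_le (hα : 0 ≤ α) (hβ : 0 < β) (hr : 0 < r) (ω : ℝ) :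
    hdag e α β r ω ≤
      ω * (e - α * (log β + 1)) - ω * log ω + α * (log β + 1) * r := by
  have h := mul_le_mul_of_nonneg_left (tangent_le_ftilde hβ (ω / r)) (mul_nonneg hα hr.le)
  have hsplit : α * r * ((log β + 1) * (ω / r - 1)) = α * (log β + 1) * ω - α * (log β + 1) * r := by
    field_simp
  unfold hdag
  linarith

lemma hdag_of_le_mul (hr : 0 < r) {ω : ℝ} (hω : ω ≤ β * r) :
    hdag e α β r ω = ω * (e - α * (log β + 1)) - ω * log ω + α * (log β + 1) * r := by
  unfold hdag
  rw [ftilde_of_le ((div_le_iff₀ hr).mpr hω)]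
  field_simp
  ring

end hdag

theorem stmt9 (e α β r : ℝ) (hα : 0 < α) (hβ : 1 < β) (hr : 0 < r)
    (he : e ≤ (α + 1) * (Real.log β + 1) + Real.log r) :
    Real.exp (e - 1 - α * (Real.log β + 1)) ≤ β * r ∧
    (∀ ω : ℝ, 0 ≤ ω → ω ≠ Real.exp (e - 1 - α * (Real.log β + 1)) →
      hdag e α β r ω < hdag e α β r (Real.exp (e - 1 - α * (Real.log β + 1)))) ∧
    hdag e α β r (Real.exp (e - 1 - α * (Real.log β + 1))) =
      Real.exp (e - 1 - α * (Real.log β + 1)) + α * (Real.log β + 1) * r := by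
  have hβ0 : 0 < β := by linarith
  rw [show e - 1 - α * (log β + 1) = (e - α * (log β + 1)) - 1 by ring]
  set a := e - α * (log β + 1)
  have hbound : exp (a - 1) ≤ β * r := by
    rw [← exp_log (mul_pos hβ0 hr), exp_le_exp, log_mul hβ0.ne' hr.ne']
    linarith
  have hvalue : hdag e α β r (exp (a - 1)) = exp (a - 1) + α * (log β + 1) * r := by
    rw [hdag_of_le_mul hr hbound, mul_sub_mul_log_exp_sub_one]
  refine ⟨hbound, fun ω hω hne ↦ ?_, hvalue⟩
  rw [hvalue]
  linarith [hdag_le (e := e) hα.le hβ0 hr ω, mul_sub_mul_log_lt_exp_sub_one hω hne]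
end

section
/- Let e ∈ ℝ, α > 0, β > 1. Then the function h is strictly concave on (0, ∞). -/
/-!
The map `ω ↦ ω·e − ω·log ω` is strictly concave on `(0, ∞)`, so it suffices that `f̃_β` is
convex. The constant `C_{f,β}` makes the two branches of `f̃_β` meet at `β` with the common slope
`f'(β) = log β + 1`; hence `f̃_β` is differentiable with derivative `log (max ω β) + 1`, which is
monotone.
-/

open Real Set

theorem ftilde_eqOn_Ici (β : ℝ) : EqOn (ftilde β) (fun ω => ω * log ω + Cfb β) (Ici β) :=
  fun _ hω => if_pos hω

theorem ftilde_eqOn_Iic (β : ℝ) : EqOn (ftilde β) (fun ω => (log β + 1) * (ω - 1)) (Iic β) := by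
  intro ω hω
  by_cases hβω : β ≤ ω
  · obtain rfl : ω = β := le_antisymm hω hβω
    simp only [ftilde, if_pos le_rfl, Cfb]
    ring
  · exact if_neg hβω

theorem hasDerivAt_ftilde {β : ℝ} (hβ : 0 < β) (ω : ℝ) :
    HasDerivAt (ftilde β) (log (max ω β) + 1) ω := by
  have hlin : HasDerivAt (fun ω => (log β + 1) * (ω - 1)) (log β + 1) ω := by
    simpa using ((hasDerivAt_id ω).sub_const 1).const_mul (log β + 1)
  have hmul (hω : β ≤ ω) : HasDerivAt (fun ω => ω * log ω + Cfb β) (log ω + 1) ω :=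
    (hasDerivAt_mul_log (hβ.trans_le hω).ne').add_const _
  rcases lt_trichotomy ω β with hlt | rfl | hgt
  · rw [max_eq_right hlt.le]
    exact hlin.congr_of_eventuallyEq <|
      (ftilde_eqOn_Iic β).eventuallyEq_of_mem (Iic_mem_nhds hlt)
  · rw [max_self, ← hasDerivWithinAt_univ, ← Iic_union_Ici]
    exact (hlin.hasDerivWithinAt.congr (ftilde_eqOn_Iic ω) (ftilde_eqOn_Iic ω self_mem_Iic)).union
      ((hmul le_rfl).hasDerivWithinAt.congr (ftilde_eqOn_Ici ω) (ftilde_eqOn_Ici ω self_mem_Ici))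
  · rw [max_eq_left hgt.le]
    exact (hmul hgt.le).congr_of_eventuallyEq <|
      (ftilde_eqOn_Ici β).eventuallyEq_of_mem (Ici_mem_nhds hgt)

theorem convexOn_ftilde {β : ℝ} (hβ : 0 < β) : ConvexOn ℝ univ (ftilde β) := by
  refine Monotone.convexOn_univ_of_deriv (fun ω => (hasDerivAt_ftilde hβ ω).differentiableAt) ?_
  intro x y hxy
  simp only [(hasDerivAt_ftilde hβ _).deriv]
  gcongr

theorem stmt10 (e α β : ℝ) (hα : 0 < α) (hβ : 1 < β) :
    StrictConcaveOn ℝ (Set.Ioi (0 : ℝ)) (h e α β) := by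
  have hlinear : ConcaveOn ℝ (Ioi 0) fun ω : ℝ => ω * e :=
    ((LinearMap.mul ℝ ℝ).flip e).concaveOn (convex_Ioi 0)
  have hentropy : StrictConcaveOn ℝ (Ioi 0) negMulLog :=
    strictConcaveOn_negMulLog.subset Ioi_subset_Ici_self (convex_Ioi 0)
  have hrelaxed : ConvexOn ℝ (Ioi 0) fun ω => α • ftilde β ω :=
    ((convexOn_ftilde (zero_lt_one.trans hβ)).subset (subset_univ _) (convex_Ioi 0)).smul hα.le
  have hsplit : h e α β = (fun ω => ω * e) + negMulLog - fun ω => α • ftilde β ω := by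
    ext ω
    simp only [h, negMulLog, Pi.add_apply, Pi.sub_apply, smul_eq_mul]
    ring
  rw [hsplit]
  exact (hlinear.add_strictConcaveOn hentropy).sub_convexOn hrelaxed
end

section
/- Let S, A be finite nonempty sets, γ ∈ [0, 1), p₀, T as in the MDP setup, and let d : S × A → ℝ satisfy the Bellman flow constraints with ∑_a d(s, a) > 0 for every s ∈ S. Define the policy π_d(a | s) = d(s, a)/∑_{a'} d(s, a'). Then d is the occupancy measure of π_d, i.e. d^{π_d}(s, a) = d(s, a) for all (s, a). -/
/-!
Write `D s = ∑ a, d s a`, so that `d s a = D s · π_d(a | s)`. The flow constraints say that `D` is a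
fixed point of `D = (1 - γ) p₀ + γ P D`, where `P` is the (linear, mass-preserving, positive)
state-transition operator of `π_d`. Unrolling the fixed-point equation `n` times gives
`D = (1 - γ) ∑_{t < n} γ^t P^t p₀ + γ^n P^n D`, and the remainder is at most `γ^n ∑_s D s → 0`.
Hence `D s = (1 - γ) ∑_t γ^t ρ_t(s)`, and multiplying by `π_d(a | s)` gives `d^{π_d}(s, a) = d(s, a)`.
-/

/-- The state-distribution sequence: `ρ_0 = p₀` and
`ρ_{t+1}(s') = ∑_{s,a} ρ_t(s)·π(a|s)·T(s'|s,a)`. -/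
noncomputable def stateDist {S A : Type*} [Fintype S] [Fintype A]
    (p₀ : S → ℝ) (T : S → A → S → ℝ) (π : S → A → ℝ) : ℕ → S → ℝ
  | 0 => p₀
  | t + 1 => fun s' => ∑ s, ∑ a, stateDist p₀ T π t s * π s a * T s a s'

/-- The occupancy measure `d^π(s,a) = (1−γ)·∑_{t=0}^∞ γ^t·ρ_t(s)·π(a|s)`. -/
noncomputable def occMeasure {S A : Type*} [Fintype S] [Fintype A]
    (γ : ℝ) (p₀ : S → ℝ) (T : S → A → S → ℝ) (π : S → A → ℝ) (s : S) (a : A) : ℝ :=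
  (1 - γ) * ∑' t : ℕ, γ ^ t * stateDist p₀ T π t s * π s a

open Finset Filter Topology

section StateDist

variable {S A : Type*} [Fintype S] [Fintype A] {T : S → A → S → ℝ} {π : S → A → ℝ}

theorem stateDist_succ (p : S → ℝ) (n : ℕ) :
    stateDist p T π (n + 1) = stateDist (stateDist p T π 1) T π n := by
  induction n with
  | zero => rfl
  | succ n ih =>
    funext s'
    change ∑ s, ∑ a, stateDist p T π (n + 1) s * π s a * T s a s' = _
    rw [ih]
    rfl

theorem stateDist_mul_add_mul (b c : ℝ) (p q : S → ℝ) (n : ℕ) (s : S) :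
    stateDist (fun s => b * p s + c * q s) T π n s
      = b * stateDist p T π n s + c * stateDist q T π n s := by
  induction n generalizing s with
  | zero => rfl
  | succ n ih =>
    simp only [stateDist, ih, mul_sum, ← sum_add_distrib]
    exact sum_congr rfl fun _ _ => sum_congr rfl fun _ _ => by ring

theorem stateDist_nonneg (hT : ∀ s a s', 0 ≤ T s a s') (hπ : ∀ s a, 0 ≤ π s a)
    {p : S → ℝ} (hp : ∀ s, 0 ≤ p s) (n : ℕ) (s : S) : 0 ≤ stateDist p T π n s := by
  induction n generalizing s with
  | zero => exact hp s
  | succ n ih =>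
    exact sum_nonneg fun s' _ => sum_nonneg fun a' _ =>
      mul_nonneg (mul_nonneg (ih s') (hπ s' a')) (hT s' a' s)

theorem sum_stateDist (hT : ∀ s a, ∑ s', T s a s' = 1) (hπ : ∀ s, ∑ a, π s a = 1)
    (p : S → ℝ) (n : ℕ) : ∑ s, stateDist p T π n s = ∑ s, p s := by
  induction n with
  | zero => rfl
  | succ n ih =>
    calc ∑ s', stateDist p T π (n + 1) s'
        = ∑ s, ∑ a, stateDist p T π n s * π s a * ∑ s', T s a s' := by
          simp only [stateDist, mul_sum]
          rw [sum_comm]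
          exact sum_congr rfl fun _ _ => sum_comm
      _ = ∑ s, stateDist p T π n s := by
          simp only [hT, mul_one, ← mul_sum, hπ]
      _ = ∑ s, p s := ih

theorem tendsto_pow_mul_stateDist_zero {γ : ℝ} (hγ0 : 0 ≤ γ) (hγ1 : γ < 1)
    (hT : ∀ s a s', 0 ≤ T s a s') (hTsum : ∀ s a, ∑ s', T s a s' = 1)
    (hπ : ∀ s a, 0 ≤ π s a) (hπsum : ∀ s, ∑ a, π s a = 1)
    {p : S → ℝ} (hp : ∀ s, 0 ≤ p s) (s : S) :
    Tendsto (fun n => γ ^ n * stateDist p T π n s) atTop (𝓝 0) := by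
  have hle : ∀ n, stateDist p T π n s ≤ ∑ s, p s := fun n =>
    sum_stateDist hTsum hπsum p n ▸
      single_le_sum (fun s' _ => stateDist_nonneg hT hπ hp n s') (mem_univ s)
  refine squeeze_zero (fun n => mul_nonneg (pow_nonneg hγ0 n) (stateDist_nonneg hT hπ hp n s))
    (fun n => mul_le_mul_of_nonneg_left (hle n) (pow_nonneg hγ0 n)) ?_
  simpa using (tendsto_pow_atTop_nhds_zero_of_lt_one hγ0 hγ1).mul_const (∑ s, p s)

end StateDist

section Flow

variable {S A : Type*} [Fintype S] [Fintype A] {γ : ℝ} {p₀ D : S → ℝ}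
  {T : S → A → S → ℝ} {π : S → A → ℝ}

theorem eq_sum_range_add_tail_of_flow
    (hflow : ∀ s, D s = (1 - γ) * p₀ s + γ * stateDist D T π 1 s) (n : ℕ) (s : S) :
    D s = (1 - γ) * ∑ t ∈ range n, γ ^ t * stateDist p₀ T π t s
      + γ ^ n * stateDist D T π n s := by
  have hstep : ∀ n s, stateDist D T π n s
      = (1 - γ) * stateDist p₀ T π n s + γ * stateDist D T π (n + 1) s := by
    intro n s
    conv_lhs => rw [funext hflow]
    rw [stateDist_mul_add_mul, stateDist_succ D n]
  induction n with
  | zero => simp [stateDist]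
  | succ n ih =>
    rw [ih, hstep n s, sum_range_succ]
    ring

theorem hasSum_stateDist_of_flow (hγ0 : 0 ≤ γ) (hγ1 : γ < 1) (hp₀ : ∀ s, 0 ≤ p₀ s)
    (hT : ∀ s a s', 0 ≤ T s a s') (hTsum : ∀ s a, ∑ s', T s a s' = 1)
    (hπ : ∀ s a, 0 ≤ π s a) (hπsum : ∀ s, ∑ a, π s a = 1) (hD : ∀ s, 0 ≤ D s)
    (hflow : ∀ s, D s = (1 - γ) * p₀ s + γ * stateDist D T π 1 s) (s : S) :
    HasSum (fun t => (1 - γ) * (γ ^ t * stateDist p₀ T π t s)) (D s) := by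
  have hterm : ∀ t, 0 ≤ (1 - γ) * (γ ^ t * stateDist p₀ T π t s) := fun t =>
    mul_nonneg (by linarith) (mul_nonneg (pow_nonneg hγ0 t) (stateDist_nonneg hT hπ hp₀ t s))
  have hpartial : ∀ n, ∑ t ∈ range n, (1 - γ) * (γ ^ t * stateDist p₀ T π t s)
      = D s - γ ^ n * stateDist D T π n s := fun n => by
    rw [← mul_sum, eq_sum_range_add_tail_of_flow hflow n s]
    ring
  rw [hasSum_iff_tendsto_nat_of_nonneg hterm]
  simpa [hpartial] using
    tendsto_const_nhds.sub (tendsto_pow_mul_stateDist_zero hγ0 hγ1 hT hTsum hπ hπsum hD s)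

end Flow

theorem stmt17_general {S A : Type*} [Fintype S] [Fintype A]
    (γ : ℝ) (hγ0 : 0 ≤ γ) (hγ1 : γ < 1)
    (p₀ : S → ℝ) (hp₀ : ∀ s, 0 ≤ p₀ s)
    (T : S → A → S → ℝ) (hT : ∀ s a s', 0 ≤ T s a s')
    (hTsum : ∀ s a, ∑ s', T s a s' = 1)
    (d : S → A → ℝ) (hd0 : ∀ s a, 0 ≤ d s a)
    (hflow : ∀ s, ∑ a, d s a =
      (1 - γ) * p₀ s + γ * ∑ s', ∑ a', T s' a' s * d s' a')
    (hdpos : ∀ s, 0 < ∑ a, d s a) :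
    ∀ s a, occMeasure γ p₀ T (fun s a => d s a / ∑ a', d s a') s a = d s a := by
  set π : S → A → ℝ := fun s a => d s a / ∑ a', d s a'
  have hd : ∀ s a, d s a = (∑ a', d s a') * π s a := fun s a =>
    (mul_div_cancel₀ _ (hdpos s).ne').symm
  have hπ : ∀ s a, 0 ≤ π s a := fun s a => div_nonneg (hd0 s a) (hdpos s).le
  have hπsum : ∀ s, ∑ a, π s a = 1 := fun s => by
    rw [← sum_div, div_self (hdpos s).ne']
  have hflowD : ∀ s, ∑ a, d s a
      = (1 - γ) * p₀ s + γ * stateDist (fun s => ∑ a, d s a) T π 1 s := fun s => by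
    rw [hflow s]
    congr 2
    exact sum_congr rfl fun s' _ => sum_congr rfl fun a' _ => by
      rw [hd s' a']; simp only [stateDist]; ring
  intro s a
  have hsum := hasSum_stateDist_of_flow hγ0 hγ1 hp₀ hT hTsum hπ hπsum
    (fun s => (hdpos s).le) hflowD s
  rw [occMeasure, hd s a, ← hsum.tsum_eq, ← tsum_mul_left, ← tsum_mul_right]
  exact tsum_congr fun t => by ring

theorem stmt17 {S A : Type*} [Fintype S] [Fintype A] [Nonempty S] [Nonempty A]
    (γ : ℝ) (hγ0 : 0 ≤ γ) (hγ1 : γ < 1)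
    (p₀ : S → ℝ) (hp₀ : ∀ s, 0 ≤ p₀ s) (hp₀sum : ∑ s, p₀ s = 1)
    (T : S → A → S → ℝ) (hT : ∀ s a s', 0 ≤ T s a s')
    (hTsum : ∀ s a, ∑ s', T s a s' = 1)
    (d : S → A → ℝ) (hd0 : ∀ s a, 0 ≤ d s a)
    (hflow : ∀ s, ∑ a, d s a =
      (1 - γ) * p₀ s + γ * ∑ s', ∑ a', T s' a' s * d s' a')
    (hdpos : ∀ s, 0 < ∑ a, d s a) :
    ∀ s a, occMeasure γ p₀ T (fun s a => d s a / ∑ a', d s a') s a = d s a :=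
  stmt17_general γ hγ0 hγ1 p₀ hp₀ T hT hTsum d hd0 hflow hdpos
end
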